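/- arXiv:1109.6557 — 2 statements merged into one kernel-verified Lean document; each statement's English description precedes it below -/
import Mathlib

section
/- Let p_1 < p_2 < ... be the primes in ascending order and define π_k(n) := #{m : 2 ≤ m ≤ n such that for every l with 1 ≤ l ≤ k it is not the case that p_l divides m and p_l² ≤ m}. Then for every k ≥ 1, π_k(n)/n tends to ∏_{l=1}^{k} (1 − 1/p_l) as n → ∞. -/
open Filter

open Classical in
/-- `π_k(n)`: the number of integers `m` with `2 ≤ m ≤ n` passing all `k`
sieving conditions, where the condition for the `l`-th prime
`p_l = Nat.nth Nat.Prime (l - 1)` holds at `m` when `p_l ∣ m` and `p_l² ≤ m`. -/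
noncomputable def piK (k n : ℕ) : ℕ :=
  ((Finset.Icc 2 n).filter (fun m => ∀ l ∈ Finset.Icc 1 k,
    ¬(Nat.nth Nat.Prime (l - 1) ∣ m ∧ (Nat.nth Nat.Prime (l - 1)) ^ 2 ≤ m))).card

/-!
For `m ≥ max 2 p_k²` the `k` sieving conditions at `m` say exactly that `m` is coprime to
`q = p_1 ⋯ p_k`, so `π_k(n)` stays within bounded distance of the number of integers below `n`
coprime to `q`. Coprimality to `q` is `q`-periodic, so that number is `φ(q)/q · n + O(q)`, and
`φ(q)/q = ∏ (1 - 1/p_l)` by Euler's product formula.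
-/

open Finset Function Topology

theorem tendsto_div_natCast_of_abs_sub_le {f g : ℕ → ℝ} {c C : ℝ} (hfg : ∀ n, |f n - g n| ≤ C)
    (hg : Tendsto (fun n => g n / n) atTop (𝓝 c)) :
    Tendsto (fun n => f n / n) atTop (𝓝 c) := by
  have hdiff : Tendsto (fun n => (f n - g n) / n) atTop (𝓝 0) :=
    squeeze_zero_norm (fun n => by
        rw [norm_div, Real.norm_eq_abs, norm_natCast]
        exact div_le_div_of_nonneg_right (hfg n) n.cast_nonneg)
      (tendsto_const_div_atTop_nhds_zero_nat C)
  simpa [sub_div] using hg.add hdiff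

namespace Nat

section Count

variable {p q : ℕ → Prop} [DecidablePred p] [DecidablePred q]

theorem count_mul_add_of_periodic {a : ℕ} (hp : Periodic p a) (j r : ℕ) :
    count p (a * j + r) = j * count p a + count p r := by
  induction j generalizing r with
  | zero => simp
  | succ j ih =>
    have hshift : count p (a + r) = count p a + count p r := by
      rw [count_add]
      congr 2
      ext k
      rw [add_comm, hp]
    rw [mul_add_one, add_assoc, ih, hshift]
    ring

theorem abs_count_sub_le_of_periodic {a : ℕ} (hp : Periodic p a) (ha : 0 < a) (n : ℕ) :
    |(count p n : ℝ) - count p a / a * n| ≤ a := by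
  set r := n % a
  have ha' : (0 : ℝ) < a := by exact_mod_cast ha
  have hr : (r : ℝ) < a := by exact_mod_cast mod_lt n ha
  have hcr : (count p r : ℝ) ≤ r := by exact_mod_cast count_le p
  have hca : (count p a : ℝ) / a ≤ 1 := (div_le_one ha').2 (by exact_mod_cast count_le p)
  have hsplit : (count p n : ℝ) - count p a / a * n = count p r - count p a / a * r := by
    rw [← div_add_mod n a, count_mul_add_of_periodic hp]
    push_cast
    field_simp
    ring
  rw [hsplit]
  refine (abs_sub_lt_of_nonneg_of_lt (cast_nonneg _) (hcr.trans_lt hr) (by positivity) ?_).le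
  exact (mul_le_of_le_one_left (cast_nonneg _) hca).trans_lt hr

theorem count_le_count_add_of_forall_ge {N : ℕ} (h : ∀ m ≥ N, p m → q m) (n : ℕ) :
    count p n ≤ count q n + N := by
  simp only [count_eq_card_filter_range]
  calc #{x ∈ range n | p x} ≤ #({x ∈ range n | q x} ∪ range N) := by
        refine card_le_card fun m hm => ?_
        simp only [mem_filter, mem_union, mem_range] at hm ⊢
        by_cases hmN : m < N
        · exact Or.inr hmN
        · exact Or.inl ⟨hm.1, h m (not_lt.1 hmN) hm.2⟩
    _ ≤ #{x ∈ range n | q x} + N := by simpa using card_union_le {x ∈ range n | q x} (range N)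

theorem exists_abs_count_sub_count_le (h : ∀ᶠ m in atTop, p m ↔ q m) :
    ∃ C : ℝ, ∀ n, |(count p n : ℝ) - count q n| ≤ C := by
  obtain ⟨N, hN⟩ := eventually_atTop.1 h
  refine ⟨N, fun n => abs_sub_le_iff.2 ⟨?_, ?_⟩⟩
  · have := count_le_count_add_of_forall_ge (fun m hm => (hN m hm).1) n
    rw [sub_le_iff_le_add']
    exact_mod_cast this
  · have := count_le_count_add_of_forall_ge (fun m hm => (hN m hm).2) n
    rw [sub_le_iff_le_add']
    exact_mod_cast this

theorem tendsto_count_div_of_periodic {a : ℕ} (hp : Periodic p a) (ha : 0 < a) :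
    Tendsto (fun n => (count p n : ℝ) / n) atTop (𝓝 (count p a / a)) := by
  refine tendsto_div_natCast_of_abs_sub_le (abs_count_sub_le_of_periodic hp ha) ?_
  refine tendsto_const_nhds.congr' ?_
  filter_upwards [eventually_ne_atTop 0] with n hn
  field_simp

theorem tendsto_count_div_congr {c : ℝ} (h : ∀ᶠ m in atTop, p m ↔ q m)
    (hq : Tendsto (fun n => (count q n : ℝ) / n) atTop (𝓝 c)) :
    Tendsto (fun n => (count p n : ℝ) / n) atTop (𝓝 c) := by
  obtain ⟨C, hC⟩ := exists_abs_count_sub_count_le h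
  exact tendsto_div_natCast_of_abs_sub_le hC hq

end Count

theorem eventually_sieved_iff_coprime {s : Finset ℕ} (hs : ∀ p ∈ s, p.Prime) :
    ∀ᶠ m in atTop, (2 ≤ m ∧ ∀ p ∈ s, ¬(p ∣ m ∧ p ^ 2 ≤ m)) ↔ (∏ p ∈ s, p).Coprime m := by
  filter_upwards [eventually_ge_atTop 2,
    (eventually_all_finset s).2 fun p _ => eventually_ge_atTop (p ^ 2)] with m h2 hsq
  simp only [coprime_prod_left_iff, h2, true_and]
  exact forall₂_congr fun p hp => by simp [(hs p hp).coprime_iff_not_dvd, hsq p hp]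

theorem totient_prod_primes_div {s : Finset ℕ} (hs : ∀ p ∈ s, p.Prime) :
    (φ (∏ p ∈ s, p) : ℝ) / (∏ p ∈ s, p : ℕ) = ∏ p ∈ s, (1 - 1 / (p : ℝ)) := by
  have h := congrArg (Rat.cast : ℚ → ℝ) (totient_eq_mul_prod_factors (∏ p ∈ s, p))
  rw [primeFactors_prod hs] at h
  have hpos : (0 : ℝ) < (∏ p ∈ s, p : ℕ) := by exact_mod_cast prod_pos fun p hp => (hs p hp).pos
  push_cast at h hpos ⊢
  rw [h, mul_div_cancel_left₀ _ hpos.ne']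
  simp [one_div]

end Nat

noncomputable def firstPrimes (k : ℕ) : Finset ℕ :=
  (Icc 1 k).image fun l => Nat.nth Nat.Prime (l - 1)

theorem prime_of_mem_firstPrimes {k p : ℕ} (hp : p ∈ firstPrimes k) : p.Prime := by
  obtain ⟨l, -, rfl⟩ := mem_image.1 hp
  exact Nat.prime_nth_prime _

theorem prod_firstPrimes {M : Type*} [CommMonoid M] (f : ℕ → M) (k : ℕ) :
    ∏ p ∈ firstPrimes k, f p = ∏ l ∈ Icc 1 k, f (Nat.nth Nat.Prime (l - 1)) := by
  refine prod_image fun l hl l' hl' h => ?_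
  have := Nat.nth_injective Nat.infinite_setOfPred_prime h
  simp only [coe_Icc, Set.mem_Icc] at hl hl'
  omega

open Classical in
theorem piK_eq_count (k n : ℕ) :
    piK k n = Nat.count (fun m => 2 ≤ m ∧ ∀ p ∈ firstPrimes k, ¬(p ∣ m ∧ p ^ 2 ≤ m)) (n + 1) := by
  rw [Nat.count_eq_card_filter_range, piK]
  congr 1
  ext m
  simp only [mem_filter, mem_Icc, mem_range, Nat.lt_succ_iff, firstPrimes, forall_mem_image]
  tauto

theorem density_sieved_by_first_k_primes_general (k : ℕ) :
    Tendsto (fun n : ℕ => (piK k n : ℝ) / n) atTop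
      (nhds (∏ l ∈ Finset.Icc 1 k, (1 - 1 / (Nat.nth Nat.Prime (l - 1) : ℝ)))) := by
  classical
  have hs : ∀ p ∈ firstPrimes k, p.Prime := fun p => prime_of_mem_firstPrimes
  rw [← prod_firstPrimes fun p : ℕ => 1 - 1 / (p : ℝ), ← Nat.totient_prod_primes_div hs]
  have hcop := Nat.tendsto_count_div_of_periodic (Nat.periodic_coprime (∏ p ∈ firstPrimes k, p))
    (prod_pos fun p hp => (hs p hp).pos)
  rw [Nat.count_eq_card_filter_range, ← Nat.totient_eq_card_coprime] at hcop
  refine tendsto_div_natCast_of_abs_sub_le (C := 1) (fun n => ?_)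
    (Nat.tendsto_count_div_congr (Nat.eventually_sieved_iff_coprime hs) hcop)
  rw [piK_eq_count, Nat.count_succ]
  split_ifs <;> simp

/-- The asymptotic density of the integers relatively prime (in the sieving sense)
to the first `k` primes is `∏_{l=1}^{k} (1 - 1/p_l)`. -/
theorem density_sieved_by_first_k_primes (k : ℕ) (hk : 1 ≤ k) :
    Tendsto (fun n : ℕ => (piK k n : ℝ) / n) atTop
      (nhds (∏ l ∈ Finset.Icc 1 k, (1 - 1 / (Nat.nth Nat.Prime (l - 1) : ℝ)))) :=
  density_sieved_by_first_k_primes_general k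
end

section
/- Let p_1 < p_2 < ... be the primes in ascending order and define π_k^{twin}(n) := #{m : 3 ≤ m ≤ n such that it is not the case that (2 divides m and m ≥ 4), and for every l with 2 ≤ l ≤ k neither (p_l divides m and p_l² ≤ m) nor (p_l divides m+2 and p_l² ≤ m+2) holds}. Then for every k ≥ 1, π_k^{twin}(n)/n tends to (1 − 1/2)·∏_{m=2}^{k} (1 − 2/p_m) as n → ∞. -/
open Filter

open Classical in
/-- `π_k^{twin}(n)`: the number of integers `m` with `3 ≤ m ≤ n` such that `m` is
not sieved by the prime `2` and, for each `l` with `2 ≤ l ≤ k`, neither `m` nor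
`m + 2` is sieved by the `l`-th prime `p_l = Nat.nth Nat.Prime (l - 1)`. -/
noncomputable def piKTwin (k n : ℕ) : ℕ :=
  ((Finset.Icc 3 n).filter (fun m => ¬(2 ∣ m ∧ 4 ≤ m) ∧
    ∀ l ∈ Finset.Icc 2 k,
      ¬(Nat.nth Nat.Prime (l - 1) ∣ m ∧ (Nat.nth Nat.Prime (l - 1)) ^ 2 ≤ m) ∧
      ¬(Nat.nth Nat.Prime (l - 1) ∣ m + 2 ∧ (Nat.nth Nat.Prime (l - 1)) ^ 2 ≤ m + 2))).card

namespace TwinSieveAux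

/-- the l-th prime -/
noncomputable def pp (l : ℕ) : ℕ := Nat.nth Nat.Prime (l - 1)

lemma pp_prime (l : ℕ) : (pp l).Prime := Nat.prime_nth_prime _

lemma pp_pos (l : ℕ) : 0 < pp l := (pp_prime l).pos

lemma pp_lt_pp {l l' : ℕ} (h1 : 1 ≤ l) (h : l < l') : pp l < pp l' :=
  (Nat.nth_lt_nth Nat.infinite_setOf_prime).2 (by omega)

lemma pp_le_pp {l l' : ℕ} (h : l ≤ l') : pp l ≤ pp l' :=
  (Nat.nth_le_nth Nat.infinite_setOf_prime).2 (by omega)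

lemma two_lt_pp {l : ℕ} (hl : 2 ≤ l) : 2 < pp l := by
  have h1 : pp 1 = 2 := Nat.nth_prime_zero_eq_two
  calc 2 = pp 1 := h1.symm
  _ < pp l := pp_lt_pp le_rfl (by omega)

/-- the original (truncated) sieve predicate -/
def origP (k : ℕ) (m : ℕ) : Prop := ¬(2 ∣ m ∧ 4 ≤ m) ∧
  ∀ l ∈ Finset.Icc 2 k, ¬(pp l ∣ m ∧ (pp l)^2 ≤ m) ∧ ¬(pp l ∣ m+2 ∧ (pp l)^2 ≤ m+2)

noncomputable instance (k m : ℕ) : Decidable (origP k m) := by unfold origP pp; infer_instance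

lemma piKTwin_eq (k n : ℕ) : piKTwin k n = ((Finset.Icc 3 n).filter (origP k)).card := rfl

/-- the sieving period -/
noncomputable def PP (k : ℕ) : ℕ := 2 * ∏ l ∈ Finset.Icc 2 k, pp l

lemma PP_pos (k : ℕ) : 0 < PP k := by
  have : 0 < ∏ l ∈ Finset.Icc 2 k, pp l := Finset.prod_pos fun l _ => pp_pos l
  simp only [PP]; omega

lemma two_dvd_PP (k : ℕ) : 2 ∣ PP k := Dvd.intro _ rfl

lemma pp_dvd_PP {k l : ℕ} (hl : l ∈ Finset.Icc 2 k) : pp l ∣ PP k :=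
  dvd_mul_of_dvd_right (Finset.dvd_prod_of_mem _ hl) 2

/-- the pure congruence ("sieved") condition -/
def Q (k m : ℕ) : Prop :=
  ¬ 2 ∣ m ∧ ∀ l ∈ Finset.Icc 2 k, ¬ pp l ∣ m ∧ ¬ pp l ∣ (m + 2)

noncomputable instance (k m : ℕ) : Decidable (Q k m) := by unfold Q pp; infer_instance

lemma dvd_shift {d P t m : ℕ} (h : d ∣ P) : d ∣ m + t * P ↔ d ∣ m := by
  rw [Nat.add_comm]; exact Nat.dvd_add_right (h.mul_left t)

lemma Q_shift (k t m : ℕ) : Q k (m + t * PP k) ↔ Q k m := by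
  unfold Q
  refine and_congr (not_congr (dvd_shift (two_dvd_PP k))) (forall₂_congr fun l hl => ?_)
  rw [not_congr (dvd_shift (pp_dvd_PP hl)),
    show m + t * PP k + 2 = (m + 2) + t * PP k by ring,
    not_congr (dvd_shift (pp_dvd_PP hl))]

lemma Q_mod (k m : ℕ) : Q k m ↔ Q k (m % PP k) := by
  conv_lhs => rw [← Nat.mod_add_div' m (PP k), Q_shift]

/-- generic mod-periodicity from shift-periodicity -/
lemma mod_period {R : ℕ → Prop} {P : ℕ} (hR : ∀ t m, R (m + t * P) ↔ R m) (m : ℕ) :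
    R m ↔ R (m % P) := by
  conv_lhs => rw [← Nat.mod_add_div' m P, hR]

/-- CRT counting lemma -/
lemma crt_count (a b : ℕ) (ha : 0 < a) (hb : 0 < b) (hab : Nat.Coprime a b)
    (Ra Rb : ℕ → Prop) [DecidablePred Ra] [DecidablePred Rb]
    (hRa : ∀ m, Ra m ↔ Ra (m % a)) (hRb : ∀ m, Rb m ↔ Rb (m % b)) :
    ((Finset.range (a * b)).filter (fun r => Ra r ∧ Rb r)).card
      = ((Finset.range a).filter Ra).card * ((Finset.range b).filter Rb).card := by
  rw [← Finset.card_product, ← Finset.filter_product]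
  apply Finset.card_bij (fun r _ => ((r % a : ℕ), (r % b : ℕ)))
  · intro r hr
    simp only [Finset.mem_filter, Finset.mem_range, Finset.mem_product] at hr ⊢
    exact ⟨⟨Nat.mod_lt _ ha, Nat.mod_lt _ hb⟩, (hRa r).1 hr.2.1, (hRb r).1 hr.2.2⟩
  · intro r₁ h₁ r₂ h₂ h
    simp only [Finset.mem_filter, Finset.mem_range] at h₁ h₂
    simp only [Prod.mk.injEq] at h
    have h1 : r₁ ≡ r₂ [MOD a] := h.1
    have h2 : r₁ ≡ r₂ [MOD b] := h.2
    exact Nat.ModEq.eq_of_lt_of_lt ((Nat.modEq_and_modEq_iff_modEq_mul hab).1 ⟨h1, h2⟩) h₁.1 h₂.1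
  · intro p hp
    simp only [Finset.mem_filter, Finset.mem_range, Finset.mem_product] at hp
    obtain ⟨⟨hpa, hpb⟩, hRa1, hRb1⟩ := hp
    obtain ⟨z, hz1, hz2⟩ := Nat.chineseRemainder hab p.1 p.2
    have e1 : z % (a * b) % a = p.1 := by
      rw [Nat.mod_mod_of_dvd _ (dvd_mul_right a b), hz1]; exact Nat.mod_eq_of_lt hpa
    have e2 : z % (a * b) % b = p.2 := by
      rw [Nat.mod_mod_of_dvd _ (dvd_mul_left b a), hz2]; exact Nat.mod_eq_of_lt hpb
    refine ⟨z % (a * b), Finset.mem_filter.2 ⟨Finset.mem_range.2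
      (Nat.mod_lt _ (Nat.mul_pos ha hb)), ?_, ?_⟩, Prod.ext e1 e2⟩
    · rw [hRa, e1]; exact hRa1
    · rw [hRb, e2]; exact hRb1

/-- count of non-sieved residues for a single odd prime -/
lemma single_prime_count {p : ℕ} (hp : p.Prime) (hp3 : 3 ≤ p) :
    ((Finset.range p).filter (fun r => ¬ p ∣ r ∧ ¬ p ∣ (r + 2))).card = p - 2 := by
  have key : (Finset.range p).filter (fun r => ¬ p ∣ r ∧ ¬ p ∣ (r + 2))
      = Finset.range p \ {0, p - 2} := by
    ext r
    simp only [Finset.mem_filter, Finset.mem_range, Finset.mem_sdiff, Finset.mem_insert,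
      Finset.mem_singleton]
    constructor
    · rintro ⟨hr, h1, h2⟩
      refine ⟨hr, ?_⟩
      rintro (rfl | rfl)
      · exact h1 (dvd_zero p)
      · exact h2 ⟨1, by omega⟩
    · rintro ⟨hr, h0⟩
      push_neg at h0
      refine ⟨hr, ?_, ?_⟩
      · intro hd
        exact h0.1 (Nat.eq_zero_of_dvd_of_lt hd hr)
      · intro hd
        obtain ⟨q, hq⟩ := hd
        have hq1 : q = 1 := by
          rcases Nat.lt_or_ge q 2 with h | h
          · interval_cases q <;> omega
          · exfalso; nlinarith
        subst hq1
        exact h0.2 (by omega)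
  rw [key, Finset.card_sdiff_of_subset]
  · rw [Finset.card_insert_of_notMem (by simp; omega), Finset.card_singleton,
      Finset.card_range]
  · intro x hx
    simp only [Finset.mem_insert, Finset.mem_singleton] at hx
    rcases hx with rfl | rfl <;> simp only [Finset.mem_range] <;> omega

lemma pp_coprime_PP {k : ℕ} (hk : 1 ≤ k) : Nat.Coprime (PP k) (pp (k + 1)) := by
  apply Nat.Coprime.symm
  rw [(pp_prime (k + 1)).coprime_iff_not_dvd]
  intro hdvd
  rcases ((pp_prime (k + 1)).dvd_mul).1 hdvd with h2 | hprod
  · have := Nat.le_of_dvd (by norm_num) h2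
    have := two_lt_pp (l := k + 1) (by omega)
    omega
  · obtain ⟨l, hl, hdl⟩ := (pp_prime (k + 1)).prime.exists_mem_finset_dvd hprod
    simp only [Finset.mem_Icc] at hl
    have heq := (Nat.prime_dvd_prime_iff_eq (pp_prime (k + 1)) (pp_prime l)).1 hdl
    have : pp l < pp (k + 1) := pp_lt_pp (by omega) (by omega)
    omega

/-- the count of residues surviving the sieve in one period -/
lemma count_range_Q (k : ℕ) (hk : 1 ≤ k) :
    ((Finset.range (PP k)).filter (Q k)).card = ∏ l ∈ Finset.Icc 2 k, (pp l - 2) := by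
  induction k with
  | zero => omega
  | succ k ih =>
    rcases Nat.eq_or_lt_of_le hk with h1 | h1
    · -- k + 1 = 1
      have hk0 : k = 0 := by omega
      subst hk0
      have hIcc : Finset.Icc 2 1 = (∅ : Finset ℕ) := Finset.Icc_eq_empty (by omega)
      have hPP : PP 1 = 2 := by simp [PP, hIcc]
      rw [hPP, hIcc, Finset.prod_empty]
      have hQ1 : ∀ m ∈ Finset.range 2, Q 1 m ↔ ¬ 2 ∣ m := by
        intro m _; unfold Q; rw [hIcc]; simp
      rw [Finset.filter_congr hQ1]
      decide
    · have hk' : 1 ≤ k := by omega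
      have hPPsucc : PP (k + 1) = PP k * pp (k + 1) := by
        unfold PP
        rw [Finset.prod_Icc_succ_top (by omega) pp]; ring
      have hQsucc : ∀ m ∈ Finset.range (PP k * pp (k+1)),
          Q (k + 1) m ↔ Q k m ∧ (¬ pp (k+1) ∣ m ∧ ¬ pp (k+1) ∣ (m + 2)) := by
        intro m _
        unfold Q
        have hins : Finset.Icc 2 (k + 1) = insert (k + 1) (Finset.Icc 2 k) := by
          ext x; simp only [Finset.mem_Icc, Finset.mem_insert]; omega
        rw [hins, Finset.forall_mem_insert]
        tauto
      have hRb_mod : ∀ m, (¬ pp (k+1) ∣ m ∧ ¬ pp (k+1) ∣ (m + 2))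
          ↔ (¬ pp (k+1) ∣ (m % pp (k+1)) ∧ ¬ pp (k+1) ∣ (m % pp (k+1) + 2)) := by
        apply mod_period
        intro t m
        rw [not_congr (dvd_shift (dvd_refl _)),
          show m + t * pp (k+1) + 2 = (m + 2) + t * pp (k+1) by ring,
          not_congr (dvd_shift (dvd_refl _))]
      rw [hPPsucc, Finset.filter_congr hQsucc]
      rw [crt_count (PP k) (pp (k+1)) (PP_pos k) (pp_pos _) (pp_coprime_PP hk')
        (Q k) _ (Q_mod k) hRb_mod]
      rw [ih hk', single_prime_count (pp_prime (k+1)) (two_lt_pp (by omega)),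
        Finset.prod_Icc_succ_top (by omega)]

/-- block counting: over `j` full periods starting at a multiple of the period -/
lemma block_count (k B j : ℕ) (hB : PP k ∣ B) :
    ((Finset.Ico B (B + j * PP k)).filter (Q k)).card
      = j * ((Finset.range (PP k)).filter (Q k)).card := by
  induction j with
  | zero => simp
  | succ j ih =>
    have hadd : B + (j + 1) * PP k = (B + j * PP k) + PP k := by ring
    rw [hadd]
    have hsplit : Finset.Ico B (B + j * PP k + PP k)
        = Finset.Ico B (B + j * PP k) ∪ Finset.Ico (B + j * PP k) (B + j * PP k + PP k) := by
      rw [Finset.Ico_union_Ico_eq_Ico (by omega) (by omega)]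
    rw [hsplit, Finset.filter_union, Finset.card_union_of_disjoint
      (Finset.disjoint_filter_filter (Finset.Ico_disjoint_Ico_consecutive _ _ _)), ih]
    have hblock : ((Finset.Ico (B + j * PP k) (B + j * PP k + PP k)).filter (Q k)).card
        = ((Finset.range (PP k)).filter (Q k)).card := by
      obtain ⟨t, ht⟩ := hB
      have hexp : ∀ r : ℕ, r + (t + j) * PP k = (PP k * t + j * PP k) + r := by
        intro r; ring
      apply Finset.card_bij (fun m _ => m - (B + j * PP k))
      · intro m hm
        simp only [Finset.mem_filter, Finset.mem_Ico, Finset.mem_range] at hm ⊢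
        obtain ⟨⟨hm1, hm2⟩, hQ⟩ := hm
        refine ⟨by omega, ?_⟩
        have hmeq : m = (m - (B + j * PP k)) + (t + j) * PP k := by
          rw [hexp, ← ht]; omega
        rw [hmeq, Q_shift] at hQ
        exact hQ
      · intro m₁ h₁ m₂ h₂ h
        simp only [Finset.mem_filter, Finset.mem_Ico] at h₁ h₂
        omega
      · intro r hr
        simp only [Finset.mem_filter, Finset.mem_range] at hr
        have hmem : B + j * PP k + r ∈ (Finset.Ico (B + j * PP k) (B + j * PP k + PP k)).filter (Q k) := by
          have hIco : B + j * PP k + r ∈ Finset.Ico (B + j * PP k) (B + j * PP k + PP k) := by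
            simp only [Finset.mem_Ico]
            omega
          refine Finset.mem_filter.2 ⟨hIco, ?_⟩
          have heq2 : B + j * PP k + r = r + (t + j) * PP k := by rw [hexp, ht]
          rw [heq2, Q_shift]
          exact hr.2
        exact ⟨B + j * PP k + r, hmem, by omega⟩
    rw [hblock]; ring

end TwinSieveAux

open TwinSieveAux Finset in
/-- The asymptotic density of twin pairs relatively prime (in the sieving sense)
to the first `k` primes is `(1 − 1/2)·∏_{m=2}^{k} (1 − 2/p_m)`. -/
theorem density_twin_sieved_by_first_k_primes (k : ℕ) (hk : 1 ≤ k) :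
    Tendsto (fun n : ℕ => (piKTwin k n : ℝ) / n) atTop
      (nhds ((1 - 1 / 2) *
        ∏ m ∈ Finset.Icc 2 k, (1 - 2 / (Nat.nth Nat.Prime (m - 1) : ℝ)))) := by
  classical
  obtain ⟨P, hP⟩ : ∃ x, x = PP k := ⟨_, rfl⟩
  obtain ⟨c, hc⟩ : ∃ x, x = ((Finset.range P).filter (Q k)).card := ⟨_, rfl⟩
  have hPpos : 0 < P := by rw [hP]; exact PP_pos k
  obtain ⟨N0, hN0⟩ : ∃ x, x = (pp k) ^ 2 := ⟨_, rfl⟩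
  obtain ⟨B, hB⟩ : ∃ x, x = P * (N0 / P + 1) := ⟨_, rfl⟩
  have hBdvd : P ∣ B := by rw [hB]; exact Dvd.intro _ rfl
  have hN0le4 : 4 ≤ N0 := by
    rw [hN0]
    have h2 := (pp_prime k).two_le
    calc 4 = 2 ^ 2 := rfl
      _ ≤ (pp k) ^ 2 := Nat.pow_le_pow_left h2 2
  have hBN0 : N0 ≤ B := by
    have h1 := Nat.div_add_mod N0 P
    have h2 := Nat.mod_lt N0 hPpos
    calc N0 = P * (N0 / P) + N0 % P := h1.symm
      _ ≤ P * (N0 / P) + P := by omega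
      _ = P * (N0 / P + 1) := by ring
      _ = B := hB.symm
  have hB4 : 4 ≤ B := le_trans hN0le4 hBN0
  have horig_iff : ∀ m, N0 ≤ m → (origP k m ↔ Q k m) := by
    intro m hm
    rw [hN0] at hm
    have h4 : 4 ≤ m := by
      have : (4:ℕ) = 2 ^ 2 := rfl
      have h2 := (pp_prime k).two_le
      have := Nat.pow_le_pow_left h2 2
      omega
    unfold origP Q
    apply and_congr
    · simp only [not_and]
      constructor
      · intro h h2; exact absurd h4 (h h2)
      · intro h h2 _; exact h h2
    · apply forall₂_congr
      intro l hl
      simp only [Finset.mem_Icc] at hl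
      have hple : pp l ≤ pp k := pp_le_pp hl.2
      have hsq : (pp l) ^ 2 ≤ m := le_trans (Nat.pow_le_pow_left hple 2) hm
      have hsq2 : (pp l) ^ 2 ≤ m + 2 := by omega
      constructor
      · rintro ⟨h1, h2⟩
        exact ⟨fun hd => h1 ⟨hd, hsq⟩, fun hd => h2 ⟨hd, hsq2⟩⟩
      · rintro ⟨h1, h2⟩
        exact ⟨fun hd => h1 hd.1, fun hd => h2 hd.1⟩
  obtain ⟨C0, hC0⟩ : ∃ x, x = ((Finset.Ico 3 B).filter (origP k)).card := ⟨_, rfl⟩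
  have hdecomp : ∀ n, B ≤ n → piKTwin k n
      = C0 + ((Finset.Ico B (n + 1)).filter (Q k)).card := by
    intro n hn
    have h1 : Finset.Icc 3 n = Finset.Ico 3 B ∪ Finset.Ico B (n + 1) := by
      rw [← Finset.Ico_add_one_right_eq_Icc, Finset.Ico_union_Ico_eq_Ico (by omega) (by omega)]
    have h2 : (Finset.Ico B (n+1)).filter (origP k) = (Finset.Ico B (n+1)).filter (Q k) := by
      apply Finset.filter_congr
      intro m hm
      simp only [Finset.mem_Ico] at hm
      exact horig_iff m (le_trans hBN0 hm.1)
    rw [hC0, piKTwin_eq, h1, Finset.filter_union, Finset.card_union_of_disjoint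
      (Finset.disjoint_filter_filter (Finset.Ico_disjoint_Ico_consecutive _ _ _)), h2]
  -- two-sided estimate
  have hest : ∀ n, B ≤ n →
      ((n + 1 - B) / P) * c ≤ piKTwin k n ∧
      piKTwin k n ≤ C0 + ((n + 1 - B) / P) * c + P := by
    intro n hn
    obtain ⟨j, hj⟩ : ∃ x, x = (n + 1 - B) / P := ⟨_, rfl⟩
    rw [← hj]
    have hx : j * P + (n + 1 - B) % P = n + 1 - B := by
      rw [hj]; exact Nat.div_add_mod' (n + 1 - B) P
    have hmod : (n + 1 - B) % P < P := Nat.mod_lt _ hPpos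
    have hjP : B + j * P ≤ n + 1 := by omega
    have hsplit : Finset.Ico B (n + 1)
        = Finset.Ico B (B + j * P) ∪ Finset.Ico (B + j * P) (n + 1) := by
      rw [Finset.Ico_union_Ico_eq_Ico (by omega) hjP]
    have hcard2 : ((Finset.Ico (B + j * P) (n + 1)).filter (Q k)).card ≤ P := by
      calc ((Finset.Ico (B + j * P) (n + 1)).filter (Q k)).card
          ≤ (Finset.Ico (B + j * P) (n + 1)).card := Finset.card_filter_le _ _
        _ = n + 1 - (B + j * P) := Nat.card_Ico _ _
        _ ≤ P := by omega
    have hblocks : ((Finset.Ico B (B + j * P)).filter (Q k)).card = j * c := by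
      have hBdvd' : PP k ∣ B := by rw [← hP]; exact hBdvd
      have hb := block_count k B j hBdvd'
      rw [← hP] at hb
      rw [hb, hc]
    rw [hdecomp n hn, hsplit, Finset.filter_union, Finset.card_union_of_disjoint
      (Finset.disjoint_filter_filter (Finset.Ico_disjoint_Ico_consecutive _ _ _)), hblocks]
    omega
  -- the limit value equals c / P
  have hcval : (c : ℝ) / P = (1 - 1 / 2) *
      ∏ m ∈ Finset.Icc 2 k, (1 - 2 / (Nat.nth Nat.Prime (m - 1) : ℝ)) := by
    have hcnat : c = ∏ l ∈ Finset.Icc 2 k, (pp l - 2) := by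
      rw [hc, hP]; exact count_range_Q k hk
    have hprod_pos : ∀ l ∈ Finset.Icc 2 k, (0:ℝ) < (pp l : ℝ) := by
      intro l _; exact_mod_cast pp_pos l
    have h1 : ∀ m ∈ Finset.Icc 2 k, (1 - 2 / (Nat.nth Nat.Prime (m - 1) : ℝ))
        = ((pp m : ℝ) - 2) / (pp m : ℝ) := by
      intro m hm
      have hne : (pp m : ℝ) ≠ 0 := ne_of_gt (hprod_pos m hm)
      show (1 - 2 / (pp m : ℝ)) = _
      field_simp
    rw [Finset.prod_congr rfl h1, Finset.prod_div_distrib]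
    have hcast : (c : ℝ) = ∏ l ∈ Finset.Icc 2 k, ((pp l : ℝ) - 2) := by
      rw [hcnat]
      push_cast
      apply Finset.prod_congr rfl
      intro l hl
      simp only [Finset.mem_Icc] at hl
      have := two_lt_pp hl.1
      rw [Nat.cast_sub (by omega : 2 ≤ pp l)]
      norm_num
    have hPcast : (P : ℝ) = 2 * ∏ l ∈ Finset.Icc 2 k, (pp l : ℝ) := by
      rw [hP]; unfold PP; push_cast; ring
    have hprodne : (∏ l ∈ Finset.Icc 2 k, (pp l : ℝ)) ≠ 0 :=
      Finset.prod_ne_zero_iff.2 fun l hl => ne_of_gt (hprod_pos l hl)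
    rw [hcast, hPcast]
    field_simp
    ring
  rw [← hcval]
  -- squeeze
  rw [← tendsto_sub_nhds_zero_iff]
  obtain ⟨D, hD⟩ : ∃ x, x = P * C0 + P * P + P * c + (B + P) * c := ⟨_, rfl⟩
  apply squeeze_zero_norm' (a := fun n : ℕ => (D : ℝ) / n)
  · filter_upwards [eventually_ge_atTop (max B 1)] with n hn
    have hnB : B ≤ n := le_trans (le_max_left _ _) hn
    have hn1 : 1 ≤ n := le_trans (le_max_right _ _) hn
    obtain ⟨hlow, hhigh⟩ := hest n hnB
    obtain ⟨j, hj⟩ : ∃ x, x = (n + 1 - B) / P := ⟨_, rfl⟩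
    rw [← hj] at hlow hhigh
    have hx : j * P + (n + 1 - B) % P = n + 1 - B := by
      rw [hj]; exact Nat.div_add_mod' (n + 1 - B) P
    have hmod : (n + 1 - B) % P < P := Nat.mod_lt _ hPpos
    have hjPn : j * P ≤ n := by omega
    have hnjP : n ≤ B + j * P + P := by omega
    -- nat bounds
    have hub : P * piKTwin k n ≤ n * c + (P * C0 + P * P + P * c) := by
      calc P * piKTwin k n ≤ P * (C0 + j * c + P) := Nat.mul_le_mul_left _ hhigh
        _ = P * C0 + (j * P) * c + P * P := by ring
        _ ≤ P * C0 + n * c + P * P := by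
            have : (j * P) * c ≤ n * c := Nat.mul_le_mul_right _ hjPn
            omega
        _ ≤ n * c + (P * C0 + P * P + P * c) := by omega
    have hlb : n * c ≤ P * piKTwin k n + (B + P) * c := by
      calc n * c ≤ (B + j * P + P) * c := Nat.mul_le_mul_right _ hnjP
        _ = (j * c) * P + (B + P) * c := by ring
        _ ≤ (piKTwin k n) * P + (B + P) * c := by
            have : (j * c) * P ≤ piKTwin k n * P := Nat.mul_le_mul_right _ hlow
            omega
        _ = P * piKTwin k n + (B + P) * c := by ring
    -- pass to the reals
    have hnpos : (0:ℝ) < n := by exact_mod_cast hn1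
    have hPposR : (0:ℝ) < P := by exact_mod_cast hPpos
    have heq : (piKTwin k n : ℝ) / n - (c : ℝ) / P
        = ((P : ℝ) * piKTwin k n - (n : ℝ) * c) / ((n : ℝ) * P) := by
      field_simp
    rw [Real.norm_eq_abs, heq, abs_div, abs_of_pos (mul_pos hnpos hPposR)]
    have hubR : (P:ℝ) * piKTwin k n ≤ (n:ℝ) * c + ((P * C0 + P * P + P * c : ℕ) : ℝ) := by
      exact_mod_cast hub
    have hlbR : (n:ℝ) * c ≤ (P:ℝ) * piKTwin k n + (((B + P) * c : ℕ) : ℝ) := by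
      exact_mod_cast hlb
    have habs : |(P : ℝ) * piKTwin k n - (n : ℝ) * c| ≤ (D : ℝ) := by
      rw [abs_le]
      have e1 : ((P * C0 + P * P + P * c : ℕ) : ℝ) ≤ (D : ℝ) := by
        have : P * C0 + P * P + P * c ≤ D := by omega
        exact_mod_cast this
      have e2 : (((B + P) * c : ℕ) : ℝ) ≤ (D : ℝ) := by
        have : (B + P) * c ≤ D := by omega
        exact_mod_cast this
      constructor <;> linarith
    rw [div_le_div_iff₀ (mul_pos hnpos hPposR) hnpos]
    have hP1 : (1:ℝ) ≤ P := by exact_mod_cast hPpos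
    have hDnn : (0:ℝ) ≤ (D:ℝ) := Nat.cast_nonneg _
    have t1 : |(P : ℝ) * piKTwin k n - (n : ℝ) * c| * n ≤ (D:ℝ) * n :=
      mul_le_mul_of_nonneg_right habs hnpos.le
    have t2 : (D:ℝ) * n * 1 ≤ (D:ℝ) * n * P :=
      mul_le_mul_of_nonneg_left hP1 (mul_nonneg hDnn hnpos.le)
    nlinarith [t1, t2]
  · exact tendsto_const_div_atTop_nhds_zero_nat _
end
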